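/- For a finite-dimensional von Neumann algebra A of operators on a finite-dimensional Hilbert space H, any operator B with ‖B‖ ≤ 1, and P_{A'} the orthogonal (Hilbert–Schmidt) projection onto the commutant A' of A, one has ‖B - P_{A'}(B)‖ ≤ sup over A-elements a with ‖a‖ ≤ 1 of ‖[a, B]‖. -/

import Mathlib

open Matrix Kronecker MeasureTheory
open scoped ComplexOrder

noncomputable section

/-- Square complex matrices of size `n`. -/
abbrev Mat (n : ℕ) := Matrix (Fin n) (Fin n) ℂ

/-- Operator norm (spectral norm) of a square matrix. -/
noncomputable def opNorm {m : Type*} [Fintype m] [DecidableEq m]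
    (A : Matrix m m ℂ) : ℝ :=
  ‖Matrix.toEuclideanCLM (𝕜 := ℂ) A‖

/-- Trace norm of a square matrix. -/
noncomputable def traceNorm {m : Type*} [Fintype m] [DecidableEq m]
    (A : Matrix m m ℂ) : ℝ :=
  (((Matrix.isHermitian_conjTranspose_mul_self A).eigenvectorUnitary : Matrix m m ℂ) *
    diagonal (((↑) : ℝ → ℂ) ∘ (√·) ∘ (Matrix.isHermitian_conjTranspose_mul_self A).eigenvalues) *
    (star (Matrix.isHermitian_conjTranspose_mul_self A).eigenvectorUnitary : Matrix m m ℂ)).trace.re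

/-- Trivial extension `Φ ⊗ id` of a map on matrices, defined entrywise. -/
def extendId {a b : ℕ} (Φ : Mat a → Mat b) (m : ℕ)
    (M : Matrix (Fin a × Fin m) (Fin a × Fin m) ℂ) :
    Matrix (Fin b × Fin m) (Fin b × Fin m) ℂ :=
  Matrix.of fun r c => Φ (Matrix.of fun p q => M (p, r.2) (q, c.2)) r.1 c.1

/-- Diamond norm of a (difference of) map(s) `Mat a → Mat b`, with ancilla of
dimension equal to the input dimension. -/
noncomputable def dnorm {a b : ℕ} (Φ : Mat a → Mat b) : ℝ :=
  ⨆ ρ : {ρ : Matrix (Fin a × Fin a) (Fin a × Fin a) ℂ // ρ.PosSemidef ∧ ρ.trace = 1},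
    traceNorm (extendId Φ a ρ.1)

/-- A map is a quantum channel (CPTP) iff it admits a Kraus representation. -/
def IsCPTP {a b : ℕ} (Φ : Mat a → Mat b) : Prop :=
  ∃ (κ : ℕ) (K : Fin κ → Matrix (Fin b) (Fin a) ℂ),
    (∀ ρ, Φ ρ = ∑ i, K i * ρ * (K i)ᴴ) ∧ (∑ i, (K i)ᴴ * K i = 1)

/-- `Nh` is a complementary channel of `N` (with environment of dimension `e`). -/
def IsComplementary {a b e : ℕ} (N : Mat a → Mat b) (Nh : Mat a → Mat e) : Prop :=
  ∃ K : Fin e → Matrix (Fin b) (Fin a) ℂ,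
    (∀ ρ, N ρ = ∑ i, K i * ρ * (K i)ᴴ) ∧ (∑ i, (K i)ᴴ * K i = 1) ∧
    (∀ ρ, Nh ρ = Matrix.of fun i j => (K i * ρ * (K j)ᴴ).trace)

/-- The commutant of a set of matrices. -/
def commutant {n : ℕ} (A : Set (Mat n)) : Set (Mat n) :=
  {X | ∀ a ∈ A, a * X = X * a}

/-- `P` is the Hilbert–Schmidt-orthogonal projection onto the set `S`. -/
def IsHSProjectionOnto {n : ℕ} (P : Mat n → Mat n) (S : Set (Mat n)) : Prop :=
  (∀ X, P X ∈ S) ∧ (∀ X ∈ S, P X = X) ∧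
  (∀ X Y, ((P X)ᴴ * Y).trace = (Xᴴ * P Y).trace)

end

/-!
Conjugations `X ↦ u X u*` by unitaries `u ∈ A` are Hilbert–Schmidt isometries preserving the
closed convex hull of the orbit `{u B u*}`. The point `Y` of minimal Hilbert–Schmidt norm in that
hull is unique, hence fixed by all of them; since `A` is spanned by its unitaries, `Y` lies in
the commutant `A'`. Every orbit point has the same Hilbert–Schmidt inner products with `A'` as
`B`, so `Y = P_{A'}(B)`. Finally `‖B - u B u*‖ = ‖[u, B]‖`, so the whole orbit, and with it its
closed convex hull, lies in the operator-norm ball around `B` whose radius is the supremum of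
commutator norms.
-/

open Set

section ConvexGeometry

theorem ContinuousLinearMap.image_closedConvexHull_subset {E F : Type*} [AddCommGroup E]
    [Module ℝ E] [TopologicalSpace E] [AddCommGroup F] [Module ℝ F] [TopologicalSpace F]
    (f : E →L[ℝ] F) (s : Set E) :
    f '' closedConvexHull ℝ s ⊆ closedConvexHull ℝ (f '' s) :=
  image_subset_iff.mpr <| closedConvexHull_min (image_subset_iff.mp subset_closedConvexHull)
    (convex_closedConvexHull.linear_preimage (f : E →ₗ[ℝ] F))
    (isClosed_closedConvexHull.preimage f.continuous)

variable {E : Type*} [NormedAddCommGroup E] [NormedSpace ℝ E] [StrictConvexSpace ℝ E]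

theorem Convex.eq_of_isMinOn_norm {K : Set E} (hK : Convex ℝ K) {x y : E} (hx : x ∈ K)
    (hy : y ∈ K) (hxK : IsMinOn (‖·‖) K x) (hyK : IsMinOn (‖·‖) K y) : x = y := by
  have hxy : ‖x‖ = ‖y‖ := le_antisymm (hxK hy) (hyK hx)
  by_contra hne
  have hmid : (1 / 2 : ℝ) • (x + y) ∈ K := by
    simpa [smul_add] using hK hx hy (by norm_num) (by norm_num) (by norm_num)
  exact ((norm_midpoint_lt_iff hxy).mpr hne).not_ge (hxK hmid)

theorem exists_mem_closedConvexHull_forall_linearIsometry_fixed [ProperSpace E] {ι : Type*}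
    {s : Set E} (hs : Bornology.IsBounded s) (hne : s.Nonempty) (T : ι → E →ₗᵢ[ℝ] E)
    (hT : ∀ i, MapsTo (T i) s s) : ∃ y ∈ closedConvexHull ℝ s, ∀ i, T i y = y := by
  have hcompact : IsCompact (closedConvexHull ℝ s) := by
    rw [closedConvexHull_eq_closure_convexHull]
    exact (isBounded_convexHull.mpr hs).isCompact_closure
  obtain ⟨y, hy, hmin⟩ :=
    hcompact.exists_isMinOn (hne.mono subset_closedConvexHull) continuous_norm.continuousOn
  refine ⟨y, hy, fun i => ?_⟩
  have hTK : MapsTo (T i) (closedConvexHull ℝ s) (closedConvexHull ℝ s) :=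
    mapsTo_iff_image_subset.mpr <|
      ((T i).toContinuousLinearMap.image_closedConvexHull_subset s).trans <|
        (closedConvexHull ℝ).monotone (hT i).image_subset
  -- `T i y` is again a minimiser, and the minimiser is unique
  refine convex_closedConvexHull.eq_of_isMinOn_norm (hTK hy) hy ?_ hmin
  exact fun x hx => ((T i).norm_map y).trans_le (hmin hx)

end ConvexGeometry

section HilbertSchmidt

variable {ι : Type*}

/-- Matrices as a Euclidean space: the inner product becomes the Hilbert–Schmidt one. -/
def Matrix.hsEquiv : Matrix ι ι ℂ ≃ₗ[ℂ] EuclideanSpace ℂ (ι × ι) :=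
  (LinearEquiv.curry ℂ ℂ ι ι).symm ≪≫ₗ (WithLp.linearEquiv 2 ℂ (ι × ι → ℂ)).symm

theorem Matrix.hsEquiv_apply (X : Matrix ι ι ℂ) (p : ι × ι) : hsEquiv X p = X p.1 p.2 := rfl

variable [Fintype ι]

theorem Matrix.inner_hsEquiv (X Y : Matrix ι ι ℂ) :
    inner ℂ (hsEquiv X) (hsEquiv Y) = (Xᴴ * Y).trace := by
  simp only [PiLp.inner_apply, hsEquiv_apply, Fintype.sum_prod_type, trace, diag, mul_apply,
    conjTranspose_apply, RCLike.inner_apply]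
  rw [Finset.sum_comm]
  exact Finset.sum_congr rfl fun i _ => Finset.sum_congr rfl fun j _ => mul_comm _ _

theorem Matrix.norm_hsEquiv_sq (X : Matrix ι ι ℂ) :
    ‖hsEquiv X‖ ^ 2 = (Xᴴ * X).trace.re := by
  rw [← inner_hsEquiv, ← RCLike.re_to_complex, inner_self_eq_norm_sq]

theorem Matrix.isClosed_setOf_trace_mul_eq (Z : Matrix ι ι ℂ) (c : ℂ) :
    IsClosed {X : Matrix ι ι ℂ | (Z * X).trace = c} :=
  isClosed_eq (by fun_prop) continuous_const

theorem Matrix.convex_setOf_trace_mul_eq (Z : Matrix ι ι ℂ) (c : ℂ) :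
    Convex ℝ {X : Matrix ι ι ℂ | (Z * X).trace = c} :=
  convex_hyperplane
    ((traceLinearMap ι ℂ ℂ ∘ₗ LinearMap.mulLeft ℂ Z).restrictScalars ℝ).isLinear c

variable [DecidableEq ι]

theorem Matrix.norm_hsEquiv_unitary_conj {u : Matrix ι ι ℂ} (hu : u ∈ unitary (Matrix ι ι ℂ))
    (X : Matrix ι ι ℂ) : ‖hsEquiv (u * X * star u)‖ = ‖hsEquiv X‖ := by
  have htrace : ((u * X * star u)ᴴ * (u * X * star u)).trace = (Xᴴ * X).trace := by
    simp only [← star_eq_conjTranspose, star_mul, star_star, mul_assoc]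
    rw [← mul_assoc (star u) u, Unitary.star_mul_self_of_mem hu, one_mul, trace_mul_comm u,
      mul_assoc, mul_assoc, Unitary.star_mul_self_of_mem hu, mul_one]
  rw [← sq_eq_sq₀ (norm_nonneg _) (norm_nonneg _), norm_hsEquiv_sq, norm_hsEquiv_sq, htrace]

def Matrix.unitaryConjHS {u : Matrix ι ι ℂ} (hu : u ∈ unitary (Matrix ι ι ℂ)) :
    EuclideanSpace ℂ (ι × ι) →ₗᵢ[ℝ] EuclideanSpace ℂ (ι × ι) where
  toFun x := hsEquiv (u * hsEquiv.symm x * star u)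
  map_add' x y := by simp only [map_add, mul_add, add_mul]
  map_smul' c x := by simp only [← Complex.coe_smul, map_smul, mul_smul_comm, smul_mul_assoc,
    RingHom.id_apply]
  norm_map' x := by simpa using norm_hsEquiv_unitary_conj hu (hsEquiv.symm x)

theorem Matrix.unitaryConjHS_hsEquiv {u : Matrix ι ι ℂ} (hu : u ∈ unitary (Matrix ι ι ℂ))
    (X : Matrix ι ι ℂ) : unitaryConjHS hu (hsEquiv X) = hsEquiv (u * X * star u) := by
  simp [unitaryConjHS]

theorem Matrix.exists_mem_closedConvexHull_unitary_conj_eq (U : Submonoid (Matrix ι ι ℂ))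
    (hU : U ≤ unitary (Matrix ι ι ℂ)) (B : Matrix ι ι ℂ) :
    ∃ Y ∈ closedConvexHull ℝ ((fun u => u * B * star u) '' U),
      ∀ u ∈ U, u * Y * star u = Y := by
  set s := (fun u => u * B * star u) '' (U : Set (Matrix ι ι ℂ))
  have hbdd : Bornology.IsBounded (hsEquiv '' s) := by
    refine (Metric.isBounded_closedBall (x := 0) (r := ‖hsEquiv B‖)).subset ?_
    rintro _ ⟨_, ⟨u, hu, rfl⟩, rfl⟩
    simp [norm_hsEquiv_unitary_conj (hU hu)]
  have hne : (hsEquiv '' s).Nonempty := ⟨hsEquiv B, B, ⟨1, U.one_mem, by simp⟩, rfl⟩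
  have hmaps (u : U) : MapsTo (unitaryConjHS (hU u.2)) (hsEquiv '' s) (hsEquiv '' s) := by
    rintro _ ⟨_, ⟨v, hv, rfl⟩, rfl⟩
    refine ⟨_, ⟨u * v, U.mul_mem u.2 hv, rfl⟩, ?_⟩
    simp [unitaryConjHS_hsEquiv, star_mul, mul_assoc]
  obtain ⟨y, hy, hfix⟩ :=
    exists_mem_closedConvexHull_forall_linearIsometry_fixed hbdd hne _ hmaps
  refine ⟨hsEquiv.symm y, ?_, fun u hu => hsEquiv.injective ?_⟩
  · simpa [image_image] using
      (hsEquiv.symm.toContinuousLinearEquiv.toContinuousLinearMap.restrictScalars ℝ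
        ).image_closedConvexHull_subset _ ⟨y, hy, rfl⟩
  · rw [← unitaryConjHS_hsEquiv (hU hu), hsEquiv.apply_symm_apply]
    exact hfix ⟨u, hu⟩

theorem Matrix.trace_mul_unitary_conj_of_commute {Z u : Matrix ι ι ℂ} (hZu : Commute Z u)
    (hu : u ∈ unitary (Matrix ι ι ℂ)) (B : Matrix ι ι ℂ) :
    (Z * (u * B * star u)).trace = (Z * B).trace :=
  calc (Z * (u * B * star u)).trace = (u * (Z * B * star u)).trace := by
        simp only [← mul_assoc, hZu.eq]
    _ = (Z * B * star u * u).trace := trace_mul_comm _ _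
    _ = (Z * B).trace := by rw [mul_assoc _ (star u), Unitary.star_mul_self_of_mem hu, mul_one]

end HilbertSchmidt

section CStar

theorem norm_sub_unitary_conj {E : Type*} [NormedRing E] [StarRing E] [CStarRing E] {u : E}
    (hu : u ∈ unitary E) (b : E) : ‖b - u * b * star u‖ = ‖u * b - b * u‖ := by
  rw [show b - u * b * star u = (b * u - u * b) * star u by
      rw [sub_mul, mul_assoc b, Unitary.mul_star_self_of_mem hu, mul_one],
    CStarRing.norm_mul_mem_unitary _ (Unitary.star_mem hu), norm_sub_rev]

theorem commute_of_unitary_conj_eq {R : Type*} [Monoid R] [StarMul R] {u y : R}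
    (hu : u ∈ unitary R) (h : u * y * star u = y) : Commute u y :=
  calc u * y = u * y * star u * u := by
        rw [mul_assoc _ (star u), Unitary.star_mul_self_of_mem hu, mul_one]
    _ = y * u := by rw [h]

theorem CStarRing.norm_le_one_of_mem_unitary {E : Type*} [NormedRing E] [StarRing E]
    [CStarRing E] {u : E} (hu : u ∈ unitary E) : ‖u‖ ≤ 1 := by
  rcases subsingleton_or_nontrivial E with _ | _
  · simp [Subsingleton.elim u 0]
  · exact (norm_of_mem_unitary hu).le

theorem StarSubalgebra.commute_of_forall_unitary {𝒜 : Type*} [CStarAlgebra 𝒜]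
    (A : StarSubalgebra ℂ 𝒜) [CompleteSpace A] {y : 𝒜}
    (hy : ∀ u ∈ A, u ∈ unitary 𝒜 → Commute u y) {a : 𝒜} (ha : a ∈ A) : Commute a y := by
  let : CStarAlgebra A := {}
  suffices ∀ x ∈ Submodule.span ℂ (unitary A : Set A), Commute (x : 𝒜) y from
    this ⟨a, ha⟩ (CStarAlgebra.span_unitary A ▸ Submodule.mem_top)
  intro x hx
  induction hx using Submodule.span_induction with
  | mem x hx => exact hy x x.2 (Unitary.map_mem A.subtype hx)
  | zero => exact Commute.zero_left y
  | add x z _ _ hx hz => exact hx.add_left hz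
  | smul c x _ hx => exact hx.smul_left c

end CStar

section Commutant

variable {n : ℕ}

def unitaryOrbit (A : StarSubalgebra ℂ (Mat n)) (B : Mat n) : Set (Mat n) :=
  (fun u => u * B * star u) '' (A.toSubmonoid ⊓ unitary (Mat n) : Submonoid (Mat n))

theorem mem_commutant_of_forall_unitary_conj_eq (A : StarSubalgebra ℂ (Mat n)) {Y : Mat n}
    (hY : ∀ u ∈ A, u ∈ unitary (Mat n) → u * Y * star u = Y) :
    Y ∈ commutant (A : Set (Mat n)) := by
  open scoped Matrix.Norms.L2Operator in
  have : FiniteDimensional ℂ A :=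
    FiniteDimensional.finiteDimensional_submodule (Subalgebra.toSubmodule A.toSubalgebra)
  have : CompleteSpace A := FiniteDimensional.complete ℂ A
  exact fun a ha => A.commute_of_forall_unitary
    (fun u hu hu' => commute_of_unitary_conj_eq hu' (hY u hu hu')) ha

theorem IsHSProjectionOnto.apply_eq_of_forall_trace_eq {P : Mat n → Mat n} {S : Set (Mat n)}
    (hP : IsHSProjectionOnto P S) (hS : ∀ X ∈ S, ∀ Y ∈ S, X - Y ∈ S) {B Y : Mat n}
    (hY : Y ∈ S) (h : ∀ Z ∈ S, (Zᴴ * Y).trace = (Zᴴ * B).trace) : P B = Y := by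
  obtain ⟨hPS, hPfix, hPsymm⟩ := hP
  have hW : P B - Y ∈ S := hS _ (hPS B) _ hY
  have hPB : ((P B - Y)ᴴ * P B).trace = ((P B - Y)ᴴ * B).trace := by
    rw [← hPsymm, hPfix _ hW]
  rw [← sub_eq_zero, ← trace_conjTranspose_mul_self_eq_zero_iff, mul_sub, trace_sub, hPB,
    h _ hW, sub_self]

theorem IsHSProjectionOnto.apply_eq_of_mem_closedConvexHull_unitaryOrbit
    {A : StarSubalgebra ℂ (Mat n)} {P : Mat n → Mat n}
    (hP : IsHSProjectionOnto P (commutant (A : Set (Mat n)))) {B Y : Mat n}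
    (hYcomm : Y ∈ commutant (A : Set (Mat n))) (hY : Y ∈ closedConvexHull ℝ (unitaryOrbit A B)) :
    P B = Y := by
  refine hP.apply_eq_of_forall_trace_eq
    (fun X hX Y hY => (Subalgebra.centralizer ℂ (A : Set (Mat n))).sub_mem hX hY) hYcomm
    fun Z hZ => closedConvexHull_min ?_ (convex_setOf_trace_mul_eq _ _)
      (isClosed_setOf_trace_mul_eq _ _) hY
  rintro _ ⟨u, ⟨hu, hu'⟩, rfl⟩
  have hZu : Commute (star Z) u := by
    simpa using (Commute.star_star (hZ (star u) (star_mem hu))).symm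
  exact trace_mul_unitary_conj_of_commute hZu hu' B

section L2OpNorm

open scoped Matrix.Norms.L2Operator

theorem bddAbove_norm_commutator (S : Set (Mat n)) (B : Mat n) :
    BddAbove {x : ℝ | ∃ a ∈ S, opNorm a ≤ 1 ∧ x = opNorm (a * B - B * a)} := by
  refine ⟨2 * ‖B‖, ?_⟩
  rintro _ ⟨a, -, ha, rfl⟩
  change ‖a‖ ≤ 1 at ha
  calc ‖a * B - B * a‖ ≤ ‖a‖ * ‖B‖ + ‖B‖ * ‖a‖ :=
        (norm_sub_le _ _).trans (add_le_add (norm_mul_le _ _) (norm_mul_le _ _))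
    _ ≤ 2 * ‖B‖ := by nlinarith [norm_nonneg B, norm_nonneg a]

theorem opNorm_sub_le_sSup_of_mem_closedConvexHull_unitaryOrbit {A : StarSubalgebra ℂ (Mat n)}
    {B Y : Mat n} (hY : Y ∈ closedConvexHull ℝ (unitaryOrbit A B)) :
    opNorm (B - Y) ≤ sSup {x : ℝ | ∃ a ∈ A, opNorm a ≤ 1 ∧ x = opNorm (a * B - B * a)} := by
  refine mem_closedBall_iff_norm'.mp <|
    closedConvexHull_min ?_ (convex_closedBall _ _) Metric.isClosed_closedBall hY
  rintro _ ⟨u, ⟨hu, hu'⟩, rfl⟩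
  rw [mem_closedBall_iff_norm', norm_sub_unitary_conj hu' B]
  exact le_csSup (bddAbove_norm_commutator A B)
    ⟨u, hu, (CStarRing.norm_le_one_of_mem_unitary hu' : ‖u‖ ≤ 1), rfl⟩

end L2OpNorm

end Commutant

theorem stmt_0_general {n : ℕ} (A : StarSubalgebra ℂ (Mat n)) (B : Mat n)
    (P : Mat n → Mat n)
    (hP : IsHSProjectionOnto P (commutant (A : Set (Mat n)))) :
    opNorm (B - P B) ≤
      sSup {x : ℝ | ∃ a ∈ A, opNorm a ≤ 1 ∧ x = opNorm (a * B - B * a)} := by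
  obtain ⟨Y, hY, hYfix⟩ :=
    exists_mem_closedConvexHull_unitary_conj_eq (A.toSubmonoid ⊓ unitary (Mat n)) inf_le_right B
  have hYcomm : Y ∈ commutant (A : Set (Mat n)) :=
    mem_commutant_of_forall_unitary_conj_eq A fun u hu hu' => hYfix u ⟨hu, hu'⟩
  rw [hP.apply_eq_of_mem_closedConvexHull_unitaryOrbit hYcomm hY]
  exact opNorm_sub_le_sSup_of_mem_closedConvexHull_unitaryOrbit hY

/-- commutator-projection lemma, lower bound. -/
theorem stmt_0 {n : ℕ} (A : StarSubalgebra ℂ (Mat n)) (B : Mat n)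
    (hB : opNorm B ≤ 1) (P : Mat n → Mat n)
    (hP : IsHSProjectionOnto P (commutant (A : Set (Mat n)))) :
    opNorm (B - P B) ≤
      sSup {x : ℝ | ∃ a ∈ A, opNorm a ≤ 1 ∧ x = opNorm (a * B - B * a)} :=
  stmt_0_general A B P hP
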